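/- arXiv:2210.09578 — 5 statements merged into one kernel-verified Lean document; each statement's English description precedes it below -/
import Mathlib

section
/- Under Assumptions (1)–(3), let P be a symmetric positive semidefinite p×p matrix satisfying the algebraic Riccati equation P = T P (I_p − K Z)ᵀ Tᵀ + Σ_η, where K = P Zᵀ (Z P Zᵀ + Σ_ε)⁻¹ (in particular the limit of the Riccati-type recursion). Then every complex eigenvalue λ of the p×p matrix T (I_p − K Z) satisfies |λ| < 1. -/
/-!
Write `A = T (I - K Z)`. The gain equation `(Z P Zᵀ + Σε) Kᵀ = Z P` turns the Riccati equation
into the Joseph form `P = A P Aᵀ + (T K) Σε (T K)ᵀ + R Q Rᵀ`. If `Aᴴ x = λ̄ x` with `|λ| ≥ 1`,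
evaluating it at `x` gives `x* P x = |λ|² x* P x + x* (T K) Σε (T K)ᵀ x + x* R Q Rᵀ x` with all
terms nonnegative, so `(T K)ᴴ x = 0` and `Rᴴ x = 0`. The first gives `Tᴴ x = Aᴴ x = λ̄ x`, hence
`(Tᵏ R)ᴴ x = λ̄ᵏ Rᴴ x = 0` for every `k`: `x` is orthogonal to the columns of the controllability
matrix, which has full rank, so `x = 0`.
-/

open Matrix
open scoped ComplexOrder

namespace Matrix

section Riccati

variable {n d α : Type*} [Fintype n] [Fintype d] [CommRing α]

noncomputable def kalmanGain [DecidableEq d] (P : Matrix n n α) (Z : Matrix d n α)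
    (Sε : Matrix d d α) : Matrix n d α :=
  P * Zᵀ * (Z * P * Zᵀ + Sε)⁻¹

theorem mul_transpose_kalmanGain [DecidableEq d] {P : Matrix n n α} {Z : Matrix d n α}
    {Sε : Matrix d d α} (hP : P.IsSymm) (hSε : Sε.IsSymm) (hS : IsUnit (Z * P * Zᵀ + Sε)) :
    (Z * P * Zᵀ + Sε) * (kalmanGain P Z Sε)ᵀ = Z * P := by
  have hSsymm : (Z * P * Zᵀ + Sε)ᵀ = Z * P * Zᵀ + Sε := by
    rw [transpose_add, transpose_mul, transpose_mul, transpose_transpose, hP.eq, hSε.eq,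
      Matrix.mul_assoc]
  rw [kalmanGain, transpose_mul, transpose_nonsing_inv, hSsymm, ← Matrix.mul_assoc,
    mul_nonsing_inv _ ((isUnit_iff_isUnit_det _).mp hS), Matrix.one_mul, transpose_mul,
    transpose_transpose, hP.eq]

theorem riccati_eq_joseph_form [DecidableEq n] {P T Sη : Matrix n n α} {Z : Matrix d n α}
    {K : Matrix n d α} {Sε : Matrix d d α} (hK : (Z * P * Zᵀ + Sε) * Kᵀ = Z * P)
    (hARE : P = T * P * (1 - K * Z)ᵀ * Tᵀ + Sη) :
    P = T * (1 - K * Z) * P * (T * (1 - K * Z))ᵀ + T * K * Sε * (T * K)ᵀ + Sη := by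
  have hgain : K * Z * P * (1 - K * Z)ᵀ = K * Sε * Kᵀ := calc
    K * Z * P * (1 - K * Z)ᵀ = K * ((Z * P * Zᵀ + Sε) * Kᵀ - Z * P * Zᵀ * Kᵀ) := by
      rw [hK, transpose_sub, transpose_one, transpose_mul]
      simp only [Matrix.mul_sub, Matrix.mul_one, Matrix.mul_assoc]
    _ = K * Sε * Kᵀ := by rw [Matrix.add_mul, add_sub_cancel_left, Matrix.mul_assoc]
  have hjoseph : P * (1 - K * Z)ᵀ = (1 - K * Z) * P * (1 - K * Z)ᵀ + K * Sε * Kᵀ := by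
    rw [← hgain, Matrix.sub_mul, Matrix.sub_mul, Matrix.one_mul, sub_add_cancel]
  conv_lhs => rw [hARE, Matrix.mul_assoc T P, hjoseph]
  simp only [transpose_mul, Matrix.mul_add, Matrix.add_mul, Matrix.mul_assoc]

theorem riccati_eq_joseph_form_of_posDef [DecidableEq n] [DecidableEq d]
    {P T Sη : Matrix n n ℝ} {Z : Matrix d n ℝ} {K : Matrix n d ℝ} {Sε : Matrix d d ℝ}
    (hP : P.PosSemidef) (hSε : Sε.PosDef) (hK : K = kalmanGain P Z Sε)
    (hARE : P = T * P * (1 - K * Z)ᵀ * Tᵀ + Sη) :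
    P = T * (1 - K * Z) * P * (T * (1 - K * Z))ᵀ + T * K * Sε * (T * K)ᵀ + Sη := by
  have hS : (Z * P * Zᵀ + Sε).PosDef := by
    simpa [conjTranspose_eq_transpose_of_trivial] using
      PosDef.posSemidef_add (hP.mul_mul_conjTranspose_same Z) hSε
  refine riccati_eq_joseph_form ?_ hARE
  rw [hK]
  exact mul_transpose_kalmanGain (isHermitian_iff_isSymm.mp hP.isHermitian)
    (isHermitian_iff_isSymm.mp hSε.isHermitian) hS.isUnit

end Riccati

section Eigenvectors

variable {m n : Type*} [Fintype m] [Fintype n]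

theorem exists_conjTranspose_mulVec_eq_star_smul_of_mem_spectrum {K : Type*} [Field K]
    [StarRing K] [DecidableEq n] {A : Matrix n n K} {μ : K} (hμ : μ ∈ spectrum K A) :
    ∃ x ≠ 0, Aᴴ *ᵥ x = star μ • x := by
  have hdet : (algebraMap K _ μ - A).det = 0 := by
    simpa [isUnit_iff_isUnit_det, isUnit_iff_ne_zero] using spectrum.mem_iff.mp hμ
  have hdetH : (algebraMap K _ μ - A)ᴴ.det = 0 := by rw [det_conjTranspose, hdet, star_zero]
  obtain ⟨x, hx0, hx⟩ := exists_mulVec_eq_zero_iff.mpr hdetH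
  refine ⟨x, hx0, ?_⟩
  rw [conjTranspose_sub, sub_mulVec, sub_eq_zero, Algebra.algebraMap_eq_smul_one,
    conjTranspose_smul, conjTranspose_one, smul_mulVec, one_mulVec] at hx
  exact hx.symm

theorem dotProduct_mul_mul_conjTranspose_mulVec {α : Type*} [CommRing α] [StarRing α]
    (B : Matrix n m α) (S : Matrix m m α) (x : n → α) :
    star x ⬝ᵥ (B * S * Bᴴ) *ᵥ x = star (Bᴴ *ᵥ x) ⬝ᵥ S *ᵥ (Bᴴ *ᵥ x) := by
  rw [← mulVec_mulVec, ← mulVec_mulVec, dotProduct_mulVec, star_mulVec,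
    conjTranspose_conjTranspose, ← dotProduct_mulVec]

theorem conjTranspose_mulVec_eq_zero_of_lyapunov {𝕜 : Type*} [RCLike 𝕜]
    {A P N : Matrix n n 𝕜} {B : Matrix n m 𝕜} {S : Matrix m m 𝕜}
    (hP : P.PosSemidef) (hS : S.PosDef) (hN : N.PosSemidef)
    (hlyap : P = A * P * Aᴴ + B * S * Bᴴ + N)
    {μ : 𝕜} (hμ : 1 ≤ ‖μ‖) {x : n → 𝕜} (hx : Aᴴ *ᵥ x = μ • x) :
    Bᴴ *ᵥ x = 0 := by
  by_contra hBx
  have hquad : RCLike.re (star x ⬝ᵥ P *ᵥ x) = ‖μ‖ ^ 2 * RCLike.re (star x ⬝ᵥ P *ᵥ x) +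
      RCLike.re (star (Bᴴ *ᵥ x) ⬝ᵥ S *ᵥ (Bᴴ *ᵥ x)) + RCLike.re (star x ⬝ᵥ N *ᵥ x) := by
    conv_lhs => rw [hlyap]
    rw [add_mulVec, add_mulVec, dotProduct_add, dotProduct_add,
      dotProduct_mul_mul_conjTranspose_mulVec, dotProduct_mul_mul_conjTranspose_mulVec, hx,
      star_smul, smul_dotProduct, mulVec_smul, dotProduct_smul, smul_smul, smul_eq_mul,
      RCLike.star_def, RCLike.conj_mul]
    simp only [map_add, ← RCLike.ofReal_pow, RCLike.re_ofReal_mul]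
  have hPx := hP.re_dotProduct_nonneg x
  have hSx := hS.re_dotProduct_pos hBx
  have hNx := hN.re_dotProduct_nonneg x
  nlinarith [one_le_pow₀ (n := 2) hμ]

theorem conjTranspose_mul_one_sub_mulVec {α : Type*} [CommRing α] [StarRing α]
    [DecidableEq n] {T : Matrix n n α} {K : Matrix n m α} {Z : Matrix m n α} {x : n → α}
    (h : (T * K)ᴴ *ᵥ x = 0) : (T * (1 - K * Z))ᴴ *ᵥ x = Tᴴ *ᵥ x := by
  rw [Matrix.mul_sub, Matrix.mul_one, ← Matrix.mul_assoc, conjTranspose_sub,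
    conjTranspose_mul _ Z, sub_mulVec, ← mulVec_mulVec, h, mulVec_zero, sub_zero]

end Eigenvectors

section Controllability

variable {n r : Type*} [Fintype n] [DecidableEq n]

def controllabilityMatrix {α : Type*} [Semiring α] (T : Matrix n n α) (R : Matrix n r α)
    (k : ℕ) : Matrix n (Fin k × r) α :=
  of fun i jl => (T ^ (jl.1 : ℕ) * R) i jl.2

theorem map_controllabilityMatrix {α β : Type*} [Semiring α] [Semiring β] (f : α →+* β)
    (T : Matrix n n α) (R : Matrix n r α) (k : ℕ) :
    (controllabilityMatrix T R k).map f = controllabilityMatrix (T.map f) (R.map f) k := by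
  ext i ⟨j, l⟩
  simp only [controllabilityMatrix, map_apply, of_apply, ← Matrix.map_pow, ← Matrix.map_mul]

-- The easy direction of the Popov–Belevitch–Hautus controllability test.
theorem conjTranspose_controllabilityMatrix_mulVec_eq_zero {α : Type*} [CommRing α]
    [StarRing α] {T : Matrix n n α} {R : Matrix n r α} {μ : α} {x : n → α}
    (hT : Tᴴ *ᵥ x = μ • x) (hR : Rᴴ *ᵥ x = 0) (k : ℕ) :
    (controllabilityMatrix T R k)ᴴ *ᵥ x = 0 := by
  have hpow (j : ℕ) : (Tᴴ ^ j) *ᵥ x = μ ^ j • x := by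
    induction j with
    | zero => simp
    | succ j ih => rw [pow_succ', ← mulVec_mulVec, ih, mulVec_smul, hT, smul_smul, pow_succ]
  ext ⟨j, l⟩
  have hj : (T ^ (j : ℕ) * R)ᴴ *ᵥ x = 0 := by
    rw [conjTranspose_mul, conjTranspose_pow, ← mulVec_mulVec, hpow, mulVec_smul, hR, smul_zero]
  simpa [controllabilityMatrix, mulVec, dotProduct] using congrFun hj l

end Controllability

section Complexification

variable {m n : Type*}

theorem conjTranspose_map_ofReal (M : Matrix m n ℝ) :
    (M.map Complex.ofReal)ᴴ = Mᵀ.map Complex.ofReal := by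
  ext i j
  simp

variable [Fintype n]

theorem map_ofReal_mul {o : Type*} (M : Matrix m n ℝ) (N : Matrix n o ℝ) :
    (M * N).map Complex.ofReal = M.map Complex.ofReal * N.map Complex.ofReal :=
  Matrix.map_mul (f := Complex.ofRealHom)

theorem map_ofReal_mul_mul_transpose (X : Matrix m n ℝ) (Y : Matrix n n ℝ) :
    (X * Y * Xᵀ).map Complex.ofReal =
      X.map Complex.ofReal * Y.map Complex.ofReal * (X.map Complex.ofReal)ᴴ := by
  rw [map_ofReal_mul, map_ofReal_mul, conjTranspose_map_ofReal]

open scoped MatrixOrder Matrix.Norms.L2Operator in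
theorem PosSemidef.map_ofReal [DecidableEq n] {M : Matrix n n ℝ} (hM : M.PosSemidef) :
    (M.map Complex.ofReal).PosSemidef := by
  obtain ⟨B, rfl⟩ := CStarAlgebra.nonneg_iff_eq_star_mul_self.mp hM.nonneg
  rw [star_eq_conjTranspose, conjTranspose_eq_transpose_of_trivial, map_ofReal_mul,
    ← conjTranspose_map_ofReal]
  exact posSemidef_conjTranspose_mul_self _

theorem PosDef.map_ofReal [DecidableEq n] {M : Matrix n n ℝ} (hM : M.PosDef) :
    (M.map Complex.ofReal).PosDef := by
  refine hM.posSemidef.map_ofReal.posDef_iff_det_ne_zero.mpr ?_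
  change (Complex.ofRealHom.mapMatrix M).det ≠ 0
  rw [← RingHom.map_det]
  exact Complex.ofReal_ne_zero.mpr hM.det_pos.ne'

theorem eq_zero_of_map_ofReal_mulVec_eq_zero {C : Matrix m n ℝ} [Fintype m]
    (hC : C.rank = Fintype.card n) {x : n → ℂ} (hx : C.map Complex.ofReal *ᵥ x = 0) :
    x = 0 := by
  have hinj : Function.Injective C.mulVec := by
    rw [mulVec_injective_iff, linearIndependent_iff_card_eq_finrank_span, Set.finrank,
      ← rank_eq_finrank_span_cols, hC]
  have hre : C *ᵥ (fun i => (x i).re) = C *ᵥ 0 := by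
    ext i
    simpa [mulVec, dotProduct, Complex.re_sum] using congrArg Complex.re (congrFun hx i)
  have him : C *ᵥ (fun i => (x i).im) = C *ᵥ 0 := by
    ext i
    simpa [mulVec, dotProduct, Complex.im_sum] using congrArg Complex.im (congrFun hx i)
  funext i
  exact Complex.ext (congrFun (hinj hre) i) (congrFun (hinj him) i)

theorem conjTranspose_map_ofReal_mulVec_eq_zero_of_lyapunov [DecidableEq n] {l : Type*}
    [Fintype m] [Fintype l] [DecidableEq m] [DecidableEq l]
    {A P : Matrix n n ℝ} {B : Matrix n m ℝ} {C : Matrix n l ℝ} {S : Matrix m m ℝ}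
    {U : Matrix l l ℝ} (hP : P.PosSemidef) (hS : S.PosDef) (hU : U.PosDef)
    (hlyap : P = A * P * Aᵀ + B * S * Bᵀ + C * U * Cᵀ) {μ : ℂ} (hμ : 1 ≤ ‖μ‖) {x : n → ℂ}
    (hx : (A.map Complex.ofReal)ᴴ *ᵥ x = μ • x) :
    (B.map Complex.ofReal)ᴴ *ᵥ x = 0 ∧ (C.map Complex.ofReal)ᴴ *ᵥ x = 0 := by
  have hlyapC := congrArg (Matrix.map · Complex.ofReal) hlyap
  simp only [Matrix.map_add _ Complex.ofReal_add, map_ofReal_mul_mul_transpose] at hlyapC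
  exact ⟨conjTranspose_mulVec_eq_zero_of_lyapunov hP.map_ofReal hS.map_ofReal
      (hU.map_ofReal.posSemidef.mul_mul_conjTranspose_same _) hlyapC hμ hx,
    conjTranspose_mulVec_eq_zero_of_lyapunov hP.map_ofReal hU.map_ofReal
      (hS.map_ofReal.posSemidef.mul_mul_conjTranspose_same _)
      (hlyapC.trans (add_right_comm _ _ _)) hμ hx⟩

theorem eq_zero_of_controllable [DecidableEq n] {r : Type*} [Fintype r]
    {T : Matrix n n ℝ} {R : Matrix n r ℝ} {k : ℕ}
    (hctr : (controllabilityMatrix T R k).rank = Fintype.card n) {μ : ℂ} {x : n → ℂ}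
    (hT : (T.map Complex.ofReal)ᴴ *ᵥ x = μ • x) (hR : (R.map Complex.ofReal)ᴴ *ᵥ x = 0) :
    x = 0 := by
  have hC : ((controllabilityMatrix T R k).map Complex.ofReal)ᴴ *ᵥ x = 0 := by
    convert conjTranspose_controllabilityMatrix_mulVec_eq_zero hT hR k using 3
    exact map_controllabilityMatrix Complex.ofRealHom T R k
  rw [conjTranspose_map_ofReal] at hC
  exact eq_zero_of_map_ofReal_mulVec_eq_zero (by rwa [rank_transpose]) hC

end Complexification

end Matrix

theorem eigenvalues_TL_lt_one_general
    {p d r₀ : ℕ}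
    (Z : Matrix (Fin d) (Fin p) ℝ) (T : Matrix (Fin p) (Fin p) ℝ)
    (Sε : Matrix (Fin d) (Fin d) ℝ) (Sη : Matrix (Fin p) (Fin p) ℝ)
    (R : Matrix (Fin p) (Fin r₀) ℝ) (Q : Matrix (Fin r₀) (Fin r₀) ℝ)
    -- Assumption (1)
    (hSε : Sε.PosDef)
    -- Assumption (3): controllability
    (hSη : Sη = R * Q * Rᵀ) (hQ : Q.PosDef)
    (hctr : (Matrix.of fun (i : Fin p) (kj : Fin p × Fin r₀) =>
      (T ^ (kj.1 : ℕ) * R) i kj.2).rank = p)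
    -- the algebraic Riccati equation
    (P : Matrix (Fin p) (Fin p) ℝ) (K : Matrix (Fin p) (Fin d) ℝ)
    (hP : P.PosSemidef)
    (hK : K = P * Zᵀ * (Z * P * Zᵀ + Sε)⁻¹)
    (hARE : P = T * P * (1 - K * Z)ᵀ * Tᵀ + Sη) :
    ∀ lam ∈ spectrum ℂ ((T * (1 - K * Z)).map (Complex.ofReal)), ‖lam‖ < 1 := by
  intro lam hlam
  by_contra! hlam1
  obtain ⟨x, hx0, hx⟩ := exists_conjTranspose_mulVec_eq_star_smul_of_mem_spectrum hlam
  have hjoseph := riccati_eq_joseph_form_of_posDef hP hSε hK (hSη ▸ hARE)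
  obtain ⟨hTK, hR⟩ := conjTranspose_map_ofReal_mulVec_eq_zero_of_lyapunov hP hSε hQ hjoseph
    (by rwa [norm_star]) hx
  rw [map_ofReal_mul] at hTK
  have hT : (T.map Complex.ofReal)ᴴ *ᵥ x = star lam • x := by
    rw [← conjTranspose_mul_one_sub_mulVec (Z := Z.map Complex.ofReal) hTK, ← hx,
      map_ofReal_mul, Matrix.map_sub _ Complex.ofReal_sub,
      Matrix.map_one _ Complex.ofReal_zero Complex.ofReal_one, map_ofReal_mul]
  exact hx0 (eq_zero_of_controllable (k := p) (by rw [Fintype.card_fin]; exact hctr) hT hR)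

/-- Under Assumptions (1)–(3), if `P` is a symmetric positive semidefinite
solution of the algebraic Riccati equation `P = T P (I − K Z)ᵀ Tᵀ + Ση` with
`K = P Zᵀ (Z P Zᵀ + Σε)⁻¹`, then every complex eigenvalue `λ` of `T (I − K Z)`
satisfies `|λ| < 1`. -/
theorem eigenvalues_TL_lt_one
    {p d r₀ : ℕ}
    (Z : Matrix (Fin d) (Fin p) ℝ) (T : Matrix (Fin p) (Fin p) ℝ)
    (Sε : Matrix (Fin d) (Fin d) ℝ) (Sη : Matrix (Fin p) (Fin p) ℝ)
    (R : Matrix (Fin p) (Fin r₀) ℝ) (Q : Matrix (Fin r₀) (Fin r₀) ℝ)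
    -- Assumption (1)
    (hSε : Sε.PosDef)
    -- Assumption (2): observability
    (hobs : (Matrix.of fun (ki : Fin p × Fin d) (j : Fin p) =>
      (Z * T ^ (ki.1 : ℕ)) ki.2 j).rank = p)
    -- Assumption (3): controllability
    (hSη : Sη = R * Q * Rᵀ) (hQ : Q.PosDef)
    (hctr : (Matrix.of fun (i : Fin p) (kj : Fin p × Fin r₀) =>
      (T ^ (kj.1 : ℕ) * R) i kj.2).rank = p)
    -- the algebraic Riccati equation
    (P : Matrix (Fin p) (Fin p) ℝ) (K : Matrix (Fin p) (Fin d) ℝ)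
    (hP : P.PosSemidef)
    (hK : K = P * Zᵀ * (Z * P * Zᵀ + Sε)⁻¹)
    (hARE : P = T * P * (1 - K * Z)ᵀ * Tᵀ + Sη) :
    ∀ lam ∈ spectrum ℂ ((T * (1 - K * Z)).map (Complex.ofReal)), ‖lam‖ < 1 :=
  eigenvalues_TL_lt_one_general Z T Sε Sη R Q hSε hSη hQ hctr P K hP hK hARE
end

section
/- In the time-varying misspecified Kalman setting, for every t ≥ 1 one has the identity E[a_{t+1} − a'_{t+1}] = T_t L'_t · E[a_t − a'_t], where the expectations are the (componentwise) means of the ℝ^p-valued random vectors. -/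
/-!
Both recursions are linear in the pair (state, observation), so taking means commutes with them.
The unbiasedness assumption `E[y_t | 𝔉_{t-1}] = Z_t a_t` gives `E y_t = Z_t E a_t`, which makes the
mean innovation of the correct filter vanish; the misspecified filter's mean innovation is then
`Z_t E[a_t - a'_t]`, and its gain `K'_t` turns `T_t` into `T_t L'_t`.
-/

open Matrix MeasureTheory

section Integral

variable {Ω : Type*} {mΩ : MeasurableSpace Ω} {μ : Measure Ω}

theorem fun_integral_sub_apply {ι E : Type*} [Fintype ι] [NormedAddCommGroup E] [NormedSpace ℝ E]
    [CompleteSpace E] {f g : Ω → ι → E} (hf : Integrable f μ) (hg : Integrable g μ) :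
    (fun i => ∫ ω, (f ω i - g ω i) ∂μ) = ∫ ω, f ω ∂μ - ∫ ω, g ω ∂μ := by
  funext i
  rw [Pi.sub_apply, eval_integral hf.eval, eval_integral hg.eval,
    integral_sub (hf.eval i) (hg.eval i)]

variable {𝕜 : Type*} [RCLike 𝕜] {m n : Type*} [Fintype m] [Fintype n]

theorem Matrix.integrable_mulVec (M : Matrix m n 𝕜) {f : Ω → n → 𝕜} (hf : Integrable f μ) :
    Integrable (fun ω => M *ᵥ f ω) μ :=
  (LinearMap.toContinuousLinearMap M.mulVecLin).integrable_comp hf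

theorem Matrix.integral_mulVec (M : Matrix m n 𝕜) {f : Ω → n → 𝕜} (hf : Integrable f μ) :
    ∫ ω, M *ᵥ f ω ∂μ = M *ᵥ ∫ ω, f ω ∂μ :=
  (LinearMap.toContinuousLinearMap M.mulVecLin).integral_comp_comm hf

end Integral

section KalmanUpdate

variable {R : Type*} [CommRing R] {m n : Type*} [Fintype m] [Fintype n] [DecidableEq n]

def kalmanUpdate (T : Matrix n n R) (K : Matrix n m R) (Z : Matrix m n R) (x : n → R)
    (y : m → R) : n → R :=
  T *ᵥ x + T *ᵥ (K *ᵥ (y - Z *ᵥ x))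

theorem kalmanUpdate_eq (T : Matrix n n R) (K : Matrix n m R) (Z : Matrix m n R) (x : n → R)
    (y : m → R) : kalmanUpdate T K Z x y = (T * (1 - K * Z)) *ᵥ x + (T * K) *ᵥ y := by
  simp only [kalmanUpdate, mulVec_sub, Matrix.mul_sub, sub_mulVec, mulVec_mulVec, Matrix.mul_one]
  abel

theorem kalmanUpdate_sub_kalmanUpdate (T : Matrix n n R) (K K' : Matrix n m R)
    (Z : Matrix m n R) (x x' : n → R) :
    kalmanUpdate T K Z x (Z *ᵥ x) - kalmanUpdate T K' Z x' (Z *ᵥ x) =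
      (T * (1 - K' * Z)) *ᵥ (x - x') := by
  simp only [kalmanUpdate, mulVec_sub, Matrix.mul_sub, sub_mulVec, mulVec_mulVec, Matrix.mul_one,
    sub_self, mulVec_zero]
  abel

end KalmanUpdate

theorem integral_kalmanUpdate {Ω : Type*} {mΩ : MeasurableSpace Ω} {μ : Measure Ω}
    {𝕜 : Type*} [RCLike 𝕜] {m n : Type*} [Fintype m] [Fintype n] [DecidableEq n]
    (T : Matrix n n 𝕜) (K : Matrix n m 𝕜) (Z : Matrix m n 𝕜) {x : Ω → n → 𝕜} {y : Ω → m → 𝕜}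
    (hx : Integrable x μ) (hy : Integrable y μ) :
    ∫ ω, kalmanUpdate T K Z (x ω) (y ω) ∂μ = kalmanUpdate T K Z (∫ ω, x ω ∂μ) (∫ ω, y ω ∂μ) := by
  simp only [kalmanUpdate_eq]
  rw [integral_add ((T * (1 - K * Z)).integrable_mulVec hx) ((T * K).integrable_mulVec hy),
    integral_mulVec _ hx, integral_mulVec _ hy]

theorem mean_diff_recursion_general
    {Ω : Type*} {m0 : MeasurableSpace Ω} (μ : Measure Ω) [IsProbabilityMeasure μ]
    (ℱ : Filtration ℕ m0)
    {d p : ℕ}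
    (Z : ℕ → Matrix (Fin d) (Fin p) ℝ) (T : ℕ → Matrix (Fin p) (Fin p) ℝ)
    (K K' : ℕ → Matrix (Fin p) (Fin d) ℝ)
    (L' : ℕ → Matrix (Fin p) (Fin p) ℝ)
    (hL' : ∀ t, L' t = 1 - K' t * Z t)
    (y : ℕ → Ω → Fin d → ℝ)
    (hy_L2 : ∀ t, MemLp (y t) 2 μ)
    (a a' : ℕ → Ω → Fin p → ℝ)
    (ha : ∀ t, 1 ≤ t → ∀ ω,
      a (t + 1) ω = (T t).mulVec (a t ω)
        + (T t).mulVec ((K t).mulVec (y t ω - (Z t).mulVec (a t ω))))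
    (ha' : ∀ t, 1 ≤ t → ∀ ω,
      a' (t + 1) ω = (T t).mulVec (a' t ω)
        + (T t).mulVec ((K' t).mulVec (y t ω - (Z t).mulVec (a' t ω))))
    (ha_L2 : ∀ t, MemLp (a t) 2 μ) (ha'_L2 : ∀ t, MemLp (a' t) 2 μ)
    (hcond : ∀ t, 1 ≤ t → μ[y t | ℱ (t - 1)] =ᵐ[μ] fun ω => (Z t).mulVec (a t ω)) :
    ∀ t, 1 ≤ t →
      (fun i => ∫ ω, (a (t + 1) ω i - a' (t + 1) ω i) ∂μ)
        = (T t * L' t).mulVec (fun i => ∫ ω, (a t ω i - a' t ω i) ∂μ) := by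
  intro t ht
  have hy := (hy_L2 t).integrable one_le_two
  have ha_int s := (ha_L2 s).integrable one_le_two
  have ha'_int s := (ha'_L2 s).integrable one_le_two
  have hEy : ∫ ω, y t ω ∂μ = Z t *ᵥ ∫ ω, a t ω ∂μ := by
    rw [← integral_condExp (ℱ.le (t - 1)), integral_congr_ae (hcond t ht),
      integral_mulVec _ (ha_int t)]
  have hstep : a (t + 1) = fun ω => kalmanUpdate (T t) (K t) (Z t) (a t ω) (y t ω) :=
    funext (ha t ht)
  have hstep' : a' (t + 1) = fun ω => kalmanUpdate (T t) (K' t) (Z t) (a' t ω) (y t ω) :=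
    funext (ha' t ht)
  rw [fun_integral_sub_apply (ha_int _) (ha'_int _), fun_integral_sub_apply (ha_int t) (ha'_int t),
    hstep, hstep', integral_kalmanUpdate _ _ _ (ha_int t) hy,
    integral_kalmanUpdate _ _ _ (ha'_int t) hy, hEy, hL', kalmanUpdate_sub_kalmanUpdate]

/-- In the time-varying misspecified Kalman setting, for every `t ≥ 1`,
`E[a_{t+1} − a'_{t+1}] = T_t L'_t E[a_t − a'_t]` (componentwise expectations). -/
theorem mean_diff_recursion
    {Ω : Type*} {m0 : MeasurableSpace Ω} (μ : Measure Ω) [IsProbabilityMeasure μ]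
    (ℱ : Filtration ℕ m0) (hℱ0 : ℱ 0 = ⊥)
    {d p : ℕ}
    (Z : ℕ → Matrix (Fin d) (Fin p) ℝ) (T : ℕ → Matrix (Fin p) (Fin p) ℝ)
    (K K' : ℕ → Matrix (Fin p) (Fin d) ℝ)
    (L' : ℕ → Matrix (Fin p) (Fin p) ℝ)
    (hL' : ∀ t, L' t = 1 - K' t * Z t)
    (y : ℕ → Ω → Fin d → ℝ)
    (hy_meas : ∀ t, StronglyMeasurable[ℱ t] (y t))
    (hy_L2 : ∀ t, MemLp (y t) 2 μ)
    (a a' : ℕ → Ω → Fin p → ℝ)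
    (a₁ a₁' : Fin p → ℝ)
    (ha1 : ∀ ω, a 1 ω = a₁) (ha1' : ∀ ω, a' 1 ω = a₁')
    (ha : ∀ t, 1 ≤ t → ∀ ω,
      a (t + 1) ω = (T t).mulVec (a t ω)
        + (T t).mulVec ((K t).mulVec (y t ω - (Z t).mulVec (a t ω))))
    (ha' : ∀ t, 1 ≤ t → ∀ ω,
      a' (t + 1) ω = (T t).mulVec (a' t ω)
        + (T t).mulVec ((K' t).mulVec (y t ω - (Z t).mulVec (a' t ω))))
    (ha_L2 : ∀ t, MemLp (a t) 2 μ) (ha'_L2 : ∀ t, MemLp (a' t) 2 μ)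
    (hcond : ∀ t, 1 ≤ t → μ[y t | ℱ (t - 1)] =ᵐ[μ] fun ω => (Z t).mulVec (a t ω)) :
    ∀ t, 1 ≤ t →
      (fun i => ∫ ω, (a (t + 1) ω i - a' (t + 1) ω i) ∂μ)
        = (T t * L' t).mulVec (fun i => ∫ ω, (a t ω i - a' t ω i) ∂μ) :=
  mean_diff_recursion_general μ ℱ Z T K K' L' hL' y hy_L2 a a' ha ha' ha_L2 ha'_L2 hcond
end

section
/- Let (B_t)_{t≥1} and B be p×p real matrices satisfying: (i) there exist M₁ > 0 and r₁ ∈ (0,1) with ‖B_t − B‖_F ≤ M₁ r₁ᵗ for all t ≥ 1 and ‖Bᵏ‖_F ≤ M₁ r₁ᵏ for all k ≥ 0; (ii) there exists M₃ > 0 such that ‖∏_{i=k}^{l} B_{t−i}‖_F ≤ M₃ for all integers 0 ≤ k ≤ l < t (where ∏_{i=k}^{l} B_{t−i} denotes the ordered product B_{t−k} B_{t−k−1} ⋯ B_{t−l}). Then there exist M > 0 and r ∈ (0,1) such that for all t ≥ 1 and all 0 ≤ j ≤ t − 1: ‖B_t B_{t−1} ⋯ B_{t−j} − B^{j+1}‖_F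 ≤ (j+1) M rᵗ. -/
open Matrix Set

/-- The Frobenius norm of a real matrix: `‖A‖_F = √(tr (A * Aᵀ))`. -/
noncomputable def frobNorm {m n : Type*} [Fintype m] [Fintype n] (A : Matrix m n ℝ) : ℝ :=
  Real.sqrt (Matrix.trace (A * Aᵀ))

/-- The ordered product `∏_{i=k}^{l} B_{t−i} = B_{t−k} B_{t−k−1} ⋯ B_{t−l}`. -/
noncomputable def ordProd {p : ℕ} (B : ℕ → Matrix (Fin p) (Fin p) ℝ) (t k l : ℕ) :
    Matrix (Fin p) (Fin p) ℝ :=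
  ((List.range (l - k + 1)).map fun i => B (t - (k + i))).prod

/-! Telescoping: `B_t ⋯ B_{t-j} - Bʲ⁺¹ = ∑_{i ≤ j} Bⁱ (B_{t-i} - B) B_{t-i-1} ⋯ B_{t-j}`.
In the `i`-th term `Bⁱ` contributes `r₁ⁱ`, the difference contributes `r₁ᵗ⁻ⁱ`, and the tail product
is bounded by `M₃` (it is the empty product `1` when `i = j`), so each of the `j + 1` terms is at
most `M₁² max M₃ ‖1‖ r₁ᵗ`. -/

theorem List.prod_map_range'_sub_pow {R : Type*} [Ring R] (f : ℕ → R) (C : R) (s n : ℕ) :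
    ((List.range' s (n + 1)).map f).prod - C ^ (n + 1) =
      ∑ i ∈ Finset.range (n + 1),
        C ^ i * (f (s + i) - C) * ((List.range' (s + i + 1) (n - i)).map f).prod := by
  induction n generalizing s with
  | zero => simp
  | succ n ih =>
    have hshift : ∀ i ∈ Finset.range (n + 1),
        C ^ (i + 1) * (f (s + (i + 1)) - C) *
            ((List.range' (s + (i + 1) + 1) (n + 1 - (i + 1))).map f).prod =
          C * (C ^ i * (f (s + 1 + i) - C) *
            ((List.range' (s + 1 + i + 1) (n - i)).map f).prod) := by
      intro i _
      rw [Nat.add_sub_add_right, show s + (i + 1) = s + 1 + i by omega, pow_succ', mul_assoc,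
        mul_assoc, mul_assoc]
    -- peel off the first factor: `f s * P - C ^ (n + 2) = (f s - C) * P + C * (P - C ^ (n + 1))`
    rw [Finset.sum_range_succ', Finset.sum_congr rfl hshift, ← Finset.mul_sum, ← ih,
      List.range'_succ, List.map_cons, List.prod_cons]
    simp only [add_zero, pow_zero, one_mul, Nat.sub_zero, pow_succ' C (n + 1)]
    noncomm_ring

theorem norm_prod_map_range'_sub_pow_le {R : Type*} [NormedRing R] (f : ℕ → R) (C : R)
    (s n : ℕ) :
    ‖((List.range' s (n + 1)).map f).prod - C ^ (n + 1)‖ ≤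
      ∑ i ∈ Finset.range (n + 1),
        ‖C ^ i‖ * ‖f (s + i) - C‖ * ‖((List.range' (s + i + 1) (n - i)).map f).prod‖ := by
  rw [List.prod_map_range'_sub_pow]
  refine (norm_sum_le _ _).trans (Finset.sum_le_sum fun i _ => ?_)
  exact (norm_mul_le _ _).trans (by gcongr; exact norm_mul_le _ _)

theorem ordProd_eq_prod_map_range' {p : ℕ} (B : ℕ → Matrix (Fin p) (Fin p) ℝ) (t k l : ℕ) :
    ordProd B t k l = ((List.range' k (l - k + 1)).map fun m => B (t - m)).prod := by
  simp [ordProd, List.range'_eq_map_range, Function.comp_def]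

attribute [local instance] Matrix.frobeniusSeminormedAddCommGroup Matrix.frobeniusNormedRing

theorem frobNorm_eq_norm {m n : Type*} [Fintype m] [Fintype n] (A : Matrix m n ℝ) :
    frobNorm A = ‖A‖ := by
  rw [frobNorm, Matrix.frobenius_norm_def, Matrix.trace, ← Real.sqrt_eq_rpow]
  congr 1
  simp_rw [Matrix.diag, Matrix.mul_apply, Matrix.transpose_apply, Real.rpow_two,
    Real.norm_eq_abs, sq_abs, sq]

theorem norm_prod_map_range'_le_of_ordProd_le {p : ℕ} (B : ℕ → Matrix (Fin p) (Fin p) ℝ)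
    (M₃ : ℝ) (hbdd : ∀ t k l : ℕ, k ≤ l → l < t → frobNorm (ordProd B t k l) ≤ M₃)
    {t i j : ℕ} (hij : i ≤ j) (hjt : j < t) :
    ‖((List.range' (i + 1) (j - i)).map fun m => B (t - m)).prod‖ ≤
      max M₃ ‖(1 : Matrix (Fin p) (Fin p) ℝ)‖ := by
  obtain rfl | hij := hij.eq_or_lt
  · simp
  · rw [show j - i = j - (i + 1) + 1 by omega, ← ordProd_eq_prod_map_range', ← frobNorm_eq_norm]
    exact le_max_of_le_left (hbdd t (i + 1) j hij hjt)

/-- If `‖B_t − B‖_F ≤ M₁ r₁ᵗ` (t ≥ 1), `‖Bᵏ‖_F ≤ M₁ r₁ᵏ` (k ≥ 0), and the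
ordered products `∏_{i=k}^{l} B_{t−i}` (`0 ≤ k ≤ l < t`) are uniformly bounded by `M₃` in
Frobenius norm, then there are `M > 0`, `r ∈ (0,1)` with
`‖B_t B_{t−1} ⋯ B_{t−j} − B^{j+1}‖_F ≤ (j+1) M rᵗ` for all `t ≥ 1`, `0 ≤ j ≤ t−1`. -/
theorem ordProd_sub_pow_le_geometric
    {p : ℕ} (B : ℕ → Matrix (Fin p) (Fin p) ℝ) (Blim : Matrix (Fin p) (Fin p) ℝ)
    (M₁ r₁ : ℝ) (hM₁ : 0 < M₁) (hr₁ : r₁ ∈ Ioo (0 : ℝ) 1)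
    (hB : ∀ t : ℕ, 1 ≤ t → frobNorm (B t - Blim) ≤ M₁ * r₁ ^ t)
    (hBpow : ∀ k : ℕ, frobNorm (Blim ^ k) ≤ M₁ * r₁ ^ k)
    (M₃ : ℝ) (hM₃ : 0 < M₃)
    (hbdd : ∀ t k l : ℕ, k ≤ l → l < t → frobNorm (ordProd B t k l) ≤ M₃) :
    ∃ M > (0 : ℝ), ∃ r ∈ Ioo (0 : ℝ) 1, ∀ t : ℕ, 1 ≤ t → ∀ j : ℕ, j < t →
      frobNorm (ordProd B t 0 j - Blim ^ (j + 1)) ≤ (j + 1 : ℝ) * M * r ^ t := by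
  set K := max M₃ ‖(1 : Matrix (Fin p) (Fin p) ℝ)‖
  have hK : 0 < K := hM₃.trans_le (le_max_left _ _)
  refine ⟨M₁ * M₁ * K, by positivity, r₁, hr₁, fun t _ j hjt => ?_⟩
  have hterm : ∀ i ∈ Finset.range (j + 1), ‖Blim ^ i‖ * ‖B (t - (0 + i)) - Blim‖ *
      ‖((List.range' (0 + i + 1) (j - i)).map fun m => B (t - m)).prod‖ ≤
        M₁ * M₁ * K * r₁ ^ t := by
    intro i hi
    have hij : i ≤ j := Finset.mem_range_succ_iff.mp hi
    have hpow : ‖Blim ^ i‖ ≤ M₁ * r₁ ^ i := frobNorm_eq_norm (Blim ^ i) ▸ hBpow i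
    have hdiff : ‖B (t - i) - Blim‖ ≤ M₁ * r₁ ^ (t - i) :=
      frobNorm_eq_norm (B (t - i) - Blim) ▸ hB (t - i) (by omega)
    have htail := norm_prod_map_range'_le_of_ordProd_le B M₃ hbdd hij hjt
    have hr₀ : 0 < r₁ := hr₁.1
    rw [zero_add]
    calc _ ≤ (M₁ * r₁ ^ i) * (M₁ * r₁ ^ (t - i)) * K := by gcongr
      _ = M₁ * M₁ * K * r₁ ^ t := by
          rw [mul_mul_mul_comm, ← pow_add, Nat.add_sub_cancel' (by omega)]; ring
  rw [frobNorm_eq_norm, ordProd_eq_prod_map_range', Nat.sub_zero]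
  refine (norm_prod_map_range'_sub_pow_le _ _ 0 j).trans
    ((Finset.sum_le_sum hterm).trans_eq ?_)
  rw [Finset.sum_const, Finset.card_range, nsmul_eq_mul]
  push_cast
  ring
end

section
/- In the time-invariant misspecified Kalman setting, assume that for some t there is a deterministic d×d matrix F_{t+1} with E[v_{t+1} v_{t+1}ᵀ | 𝔉_t] = F_{t+1} almost surely. Then the covariance matrix of v'_{t+1} satisfies the decomposition Var(v'_{t+1}) = F_{t+1} + Z · E[(a_{t+1} − a'_{t+1})(a_{t+1} − a'_{t+1})ᵀ] · Zᵀ − E[v'_{t+1}] E[v'_{t+1}]ᵀ, where Var(v'_{t+1}) := E[v'_{t+1} v'_{t+1}ᵀ] − E[v'_{t+1}] E[v'_{t+1}]ᵀ. -/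
/-!
Write `δ = a_{t+1} - a'_{t+1}`, so that `v'_{t+1} = v_{t+1} + Z δ`. Both filters are predictable,
hence `δ` is `𝔉_t`-measurable, while `E[v_{t+1} | 𝔉_t] = 0`; pulling `δ` out of the conditional
expectation kills the cross terms of `E[v'_{t+1} v'_{t+1}ᵀ]`. What remains is
`E[v_{t+1} v_{t+1}ᵀ] = F_{t+1}` by the tower property and `E[(Zδ)(Zδ)ᵀ] = Z E[δδᵀ] Zᵀ`.
-/

open Matrix MeasureTheory
open scoped ENNReal

namespace MeasureTheory

variable {Ω ι κ : Type*} {m m0 : MeasurableSpace Ω} {μ : Measure Ω}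

theorem condExp_eval [Fintype ι] {f : Ω → ι → ℝ} (hf : Integrable f μ) (i : ι) :
    μ[fun ω => f ω i | m] =ᵐ[μ] fun ω => μ[f | m] ω i :=
  ((ContinuousLinearMap.proj (R := ℝ) (φ := fun _ : ι => ℝ) i).comp_condExp_comm hf).symm

theorem condExp_sub_eq_zero_of_condExp_eq {E : Type*} [NormedAddCommGroup E] [NormedSpace ℝ E]
    [CompleteSpace E] (hm : m ≤ m0) [SigmaFinite (μ.trim hm)] {f g : Ω → E}
    (hf : Integrable f μ) (hg : Integrable g μ) (hg_meas : StronglyMeasurable[m] g)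
    (hfg : μ[f | m] =ᵐ[μ] g) :
    μ[f - g | m] =ᵐ[μ] 0 := by
  filter_upwards [condExp_sub hf hg m, hfg] with ω hsub hω
  simp [hsub, hω, condExp_of_stronglyMeasurable hm hg_meas hg]

theorem integral_mul_eq_zero_of_condExp_eq_zero (hm : m ≤ m0) [SigmaFinite (μ.trim hm)]
    {f g : Ω → ℝ} (hg : StronglyMeasurable[m] g) (hgf : Integrable (g * f) μ)
    (hf : Integrable f μ) (hf0 : μ[f | m] =ᵐ[μ] 0) :
    ∫ ω, g ω * f ω ∂μ = 0 := by
  have hgf0 : μ[g * f | m] =ᵐ[μ] 0 := by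
    filter_upwards [condExp_mul_of_stronglyMeasurable_left hg hgf hf, hf0] with ω h h0
    simp [h, h0]
  change ∫ ω, (g * f) ω ∂μ = 0
  rw [← integral_condExp hm, integral_congr_ae hgf0]
  simp

theorem integral_eq_of_condExp_eq_const [IsProbabilityMeasure μ] (hm : m ≤ m0) {f : Ω → ℝ}
    {c : ℝ} (hf : μ[f | m] =ᵐ[μ] fun _ => c) :
    ∫ ω, f ω ∂μ = c := by
  rw [← integral_condExp hm, integral_congr_ae hf, integral_const, probReal_univ, one_smul]

theorem MemLp.matrix_mulVec [Fintype ι] [Fintype κ] {q : ℝ≥0∞} (A : Matrix κ ι ℝ) {X : Ω → ι → ℝ}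
    (hX : MemLp X q μ) : MemLp (fun ω => A *ᵥ X ω) q μ :=
  (LinearMap.toContinuousLinearMap A.mulVecLin).comp_memLp' hX

variable (μ) in
noncomputable def secondMoment (X : Ω → ι → ℝ) : Matrix ι ι ℝ :=
  Matrix.of fun i j => ∫ ω, X ω i * X ω j ∂μ

theorem secondMoment_eq_of_condExp_eq_const [IsProbabilityMeasure μ] (hm : m ≤ m0)
    {X : Ω → ι → ℝ} {F : Matrix ι ι ℝ}
    (hF : ∀ i j, μ[fun ω => X ω i * X ω j | m] =ᵐ[μ] fun _ => F i j) :
    secondMoment μ X = F :=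
  Matrix.ext fun i j => integral_eq_of_condExp_eq_const hm (hF i j)

theorem secondMoment_add [Fintype ι] {X Y : Ω → ι → ℝ} (hX : MemLp X 2 μ) (hY : MemLp Y 2 μ)
    (hXY : ∀ i j, ∫ ω, X ω i * Y ω j ∂μ = 0) :
    secondMoment μ (X + Y) = secondMoment μ X + secondMoment μ Y := by
  ext i j
  have hint {U V : Ω → ι → ℝ} (hU : MemLp U 2 μ) (hV : MemLp V 2 μ) (k l : ι) :
      Integrable (fun ω => U ω k * V ω l) μ := (hU.eval k).integrable_mul (hV.eval l)
  have hYX : ∫ ω, Y ω i * X ω j ∂μ = 0 := by simpa only [mul_comm] using hXY j i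
  calc ∫ ω, (X + Y) ω i * (X + Y) ω j ∂μ
      = ∫ ω, (X ω i * X ω j + X ω i * Y ω j) + (Y ω i * X ω j + Y ω i * Y ω j) ∂μ := by
        congr 1; funext ω; simp only [Pi.add_apply]; ring
    _ = ∫ ω, X ω i * X ω j ∂μ + ∫ ω, Y ω i * Y ω j ∂μ := by
        rw [integral_add (f := fun ω => X ω i * X ω j + X ω i * Y ω j)
            (g := fun ω => Y ω i * X ω j + Y ω i * Y ω j)
            (.add (hint hX hX i j) (hint hX hY i j)) (.add (hint hY hX i j) (hint hY hY i j)),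
          integral_add (hint hX hX i j) (hint hX hY i j),
          integral_add (hint hY hX i j) (hint hY hY i j), hXY, hYX, add_zero, zero_add]

theorem secondMoment_mulVec [Fintype ι] (A : Matrix κ ι ℝ) {X : Ω → ι → ℝ} (hX : MemLp X 2 μ) :
    secondMoment μ (fun ω => A *ᵥ X ω) = A * secondMoment μ X * Aᵀ := by
  ext i j
  have hint (k l : ι) : Integrable (fun ω => X ω k * X ω l) μ :=
    (hX.eval k).integrable_mul (hX.eval l)
  calc ∫ ω, (A *ᵥ X ω) i * (A *ᵥ X ω) j ∂μ
      = ∫ ω, ∑ l, ∑ k, A i k * (X ω k * X ω l) * A j l ∂μ := by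
        congr 1; funext ω
        simp only [mulVec, dotProduct, Finset.sum_mul_sum]
        rw [Finset.sum_comm]
        exact Finset.sum_congr rfl fun _ _ => Finset.sum_congr rfl fun _ _ => by ring
    _ = ∑ l, ∑ k, A i k * (∫ ω, X ω k * X ω l ∂μ) * A j l := by
        rw [integral_finsetSum _ fun l _ =>
          integrable_finsetSum _ fun k _ => ((hint k l).const_mul _).mul_const _]
        refine Finset.sum_congr rfl fun l _ => ?_
        rw [integral_finsetSum _ fun k _ => ((hint k l).const_mul _).mul_const _]
        simp only [integral_mul_const, integral_const_mul]
    _ = (A * secondMoment μ X * Aᵀ) i j := by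
        simp only [Matrix.mul_apply, transpose_apply, secondMoment, of_apply, Finset.sum_mul]

end MeasureTheory

theorem measurable_kalmanFilter_succ {Ω : Type*} {m0 : MeasurableSpace Ω} (ℱ : Filtration ℕ m0)
    {d p : ℕ} (Z : Matrix (Fin d) (Fin p) ℝ) (T : Matrix (Fin p) (Fin p) ℝ)
    (K : ℕ → Matrix (Fin p) (Fin d) ℝ) (y : ℕ → Ω → Fin d → ℝ)
    (hy : ∀ t, StronglyMeasurable[ℱ t] (y t)) (a : ℕ → Ω → Fin p → ℝ) (a₁ : Fin p → ℝ)
    (ha1 : ∀ ω, a 1 ω = a₁)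
    (ha : ∀ t, 1 ≤ t → ∀ ω,
      a (t + 1) ω = T *ᵥ a t ω + T *ᵥ (K t *ᵥ (y t ω - Z *ᵥ a t ω))) :
    ∀ t, Measurable[ℱ t] (a (t + 1))
  | 0 => by rw [funext ha1]; exact measurable_const
  | t + 1 => by
    have ha_meas : Measurable[ℱ (t + 1)] (a (t + 1)) :=
      (measurable_kalmanFilter_succ ℱ Z T K y hy a a₁ ha1 ha t).mono (ℱ.mono t.le_succ) le_rfl
    have hy_meas : Measurable[ℱ (t + 1)] (y (t + 1)) := (hy (t + 1)).measurable
    rw [funext (ha (t + 1) t.succ_pos)]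
    fun_prop

theorem variance_misspecified_error_decomposition_general
    {Ω : Type*} {m0 : MeasurableSpace Ω} (μ : Measure Ω) [IsProbabilityMeasure μ]
    (ℱ : Filtration ℕ m0)
    {d p : ℕ}
    (Z : Matrix (Fin d) (Fin p) ℝ) (T : Matrix (Fin p) (Fin p) ℝ)
    (K K' : ℕ → Matrix (Fin p) (Fin d) ℝ)
    (y : ℕ → Ω → Fin d → ℝ)
    (hy_meas : ∀ t, StronglyMeasurable[ℱ t] (y t))
    (hy_L2 : ∀ t, MemLp (y t) 2 μ)
    (a a' : ℕ → Ω → Fin p → ℝ)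
    (a₁ a₁' : Fin p → ℝ)
    (ha1 : ∀ ω, a 1 ω = a₁) (ha1' : ∀ ω, a' 1 ω = a₁')
    (ha : ∀ t, 1 ≤ t → ∀ ω,
      a (t + 1) ω = T.mulVec (a t ω) + T.mulVec ((K t).mulVec (y t ω - Z.mulVec (a t ω))))
    (ha' : ∀ t, 1 ≤ t → ∀ ω,
      a' (t + 1) ω
        = T.mulVec (a' t ω) + T.mulVec ((K' t).mulVec (y t ω - Z.mulVec (a' t ω))))
    (ha_L2 : ∀ t, MemLp (a t) 2 μ) (ha'_L2 : ∀ t, MemLp (a' t) 2 μ)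
    (v v' : ℕ → Ω → Fin d → ℝ)
    (hv : ∀ t ω, v t ω = y t ω - Z.mulVec (a t ω))
    (hv' : ∀ t ω, v' t ω = y t ω - Z.mulVec (a' t ω))
    (hcond : ∀ t, 1 ≤ t → μ[y t | ℱ (t - 1)] =ᵐ[μ] fun ω => Z.mulVec (a t ω))
    (t : ℕ)
    (F : Matrix (Fin d) (Fin d) ℝ)
    (hF : ∀ i j,
      μ[fun ω => v (t + 1) ω i * v (t + 1) ω j | ℱ t] =ᵐ[μ] fun _ => F i j) :
    (Matrix.of fun i j => ∫ ω, v' (t + 1) ω i * v' (t + 1) ω j ∂μ)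
      - Matrix.of (fun i j => (∫ ω, v' (t + 1) ω i ∂μ) * ∫ ω, v' (t + 1) ω j ∂μ)
    = F
      + Z * (Matrix.of fun i j =>
          ∫ ω, (a (t + 1) ω i - a' (t + 1) ω i) * (a (t + 1) ω j - a' (t + 1) ω j) ∂μ) * Zᵀ
      - Matrix.of (fun i j => (∫ ω, v' (t + 1) ω i ∂μ) * ∫ ω, v' (t + 1) ω j ∂μ) := by
  have hm := ℱ.le t
  set δ : Ω → Fin p → ℝ := fun ω => a (t + 1) ω - a' (t + 1) ω
  have ha_meas := measurable_kalmanFilter_succ ℱ Z T K y hy_meas a a₁ ha1 ha t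
  have ha'_meas := measurable_kalmanFilter_succ ℱ Z T K' y hy_meas a' a₁' ha1' ha' t
  have hZa2 : MemLp (fun ω => Z *ᵥ a (t + 1) ω) 2 μ := (ha_L2 (t + 1)).matrix_mulVec Z
  have hδ2 : MemLp δ 2 μ := (ha_L2 (t + 1)).sub (ha'_L2 (t + 1))
  have hZδ2 : MemLp (fun ω => Z *ᵥ δ ω) 2 μ := hδ2.matrix_mulVec Z
  have hv_eq : v (t + 1) = y (t + 1) - fun ω => Z *ᵥ a (t + 1) ω := funext (hv (t + 1))
  have hv2 : MemLp (v (t + 1)) 2 μ := hv_eq ▸ (hy_L2 (t + 1)).sub hZa2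
  have hv'_eq : v' (t + 1) = v (t + 1) + fun ω => Z *ᵥ δ ω := by
    funext ω
    simp only [hv, hv', δ, Pi.add_apply, mulVec_sub]
    abel
  have hv_innov : μ[v (t + 1) | ℱ t] =ᵐ[μ] 0 := by
    rw [hv_eq]
    exact condExp_sub_eq_zero_of_condExp_eq hm ((hy_L2 (t + 1)).integrable one_le_two)
      (hZa2.integrable one_le_two) (by fun_prop : Measurable[ℱ t] _).stronglyMeasurable
      (hcond (t + 1) t.succ_pos)
  have hcross (i j : Fin d) : ∫ ω, v (t + 1) ω i * (Z *ᵥ δ ω) j ∂μ = 0 := by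
    have hvi_innov : μ[fun ω => v (t + 1) ω i | ℱ t] =ᵐ[μ] 0 := by
      filter_upwards [condExp_eval (m := ℱ t) (hv2.integrable one_le_two) i, hv_innov] with ω h h0
      simp [h, h0]
    simpa only [mul_comm] using integral_mul_eq_zero_of_condExp_eq_zero hm
      (by fun_prop : Measurable[ℱ t] fun ω => (Z *ᵥ δ ω) j).stronglyMeasurable
      ((hZδ2.eval j).integrable_mul (hv2.eval i)) ((hv2.eval i).integrable one_le_two) hvi_innov
  have hmoment : secondMoment μ (v' (t + 1)) = F + Z * secondMoment μ δ * Zᵀ := by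
    rw [hv'_eq, secondMoment_add hv2 hZδ2 hcross, secondMoment_mulVec Z hδ2,
      secondMoment_eq_of_condExp_eq_const hm hF]
  exact congrArg (· - _) hmoment

/-- In the time-invariant misspecified Kalman setting, if
`E[v_{t+1} v_{t+1}ᵀ | 𝔉_t] = F_{t+1}` a.s. for a deterministic matrix `F_{t+1}`, then
`Var(v'_{t+1}) = F_{t+1} + Z E[(a_{t+1} − a'_{t+1})(a_{t+1} − a'_{t+1})ᵀ] Zᵀ
  − E[v'_{t+1}] E[v'_{t+1}]ᵀ`,
where `Var(v'_{t+1}) = E[v'_{t+1} v'_{t+1}ᵀ] − E[v'_{t+1}] E[v'_{t+1}]ᵀ`. -/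
theorem variance_misspecified_error_decomposition
    {Ω : Type*} {m0 : MeasurableSpace Ω} (μ : Measure Ω) [IsProbabilityMeasure μ]
    (ℱ : Filtration ℕ m0) (hℱ0 : ℱ 0 = ⊥)
    {d p : ℕ}
    (Z : Matrix (Fin d) (Fin p) ℝ) (T : Matrix (Fin p) (Fin p) ℝ)
    (K K' : ℕ → Matrix (Fin p) (Fin d) ℝ)
    (L' : ℕ → Matrix (Fin p) (Fin p) ℝ)
    (hL' : ∀ t, L' t = 1 - K' t * Z)
    (y : ℕ → Ω → Fin d → ℝ)
    (hy_meas : ∀ t, StronglyMeasurable[ℱ t] (y t))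
    (hy_L2 : ∀ t, MemLp (y t) 2 μ)
    (a a' : ℕ → Ω → Fin p → ℝ)
    (a₁ a₁' : Fin p → ℝ)
    (ha1 : ∀ ω, a 1 ω = a₁) (ha1' : ∀ ω, a' 1 ω = a₁')
    (ha : ∀ t, 1 ≤ t → ∀ ω,
      a (t + 1) ω = T.mulVec (a t ω) + T.mulVec ((K t).mulVec (y t ω - Z.mulVec (a t ω))))
    (ha' : ∀ t, 1 ≤ t → ∀ ω,
      a' (t + 1) ω
        = T.mulVec (a' t ω) + T.mulVec ((K' t).mulVec (y t ω - Z.mulVec (a' t ω))))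
    (ha_L2 : ∀ t, MemLp (a t) 2 μ) (ha'_L2 : ∀ t, MemLp (a' t) 2 μ)
    (v v' : ℕ → Ω → Fin d → ℝ)
    (hv : ∀ t ω, v t ω = y t ω - Z.mulVec (a t ω))
    (hv' : ∀ t ω, v' t ω = y t ω - Z.mulVec (a' t ω))
    (hcond : ∀ t, 1 ≤ t → μ[y t | ℱ (t - 1)] =ᵐ[μ] fun ω => Z.mulVec (a t ω))
    (t : ℕ) (ht : 1 ≤ t)
    (F : Matrix (Fin d) (Fin d) ℝ)
    (hF : ∀ i j,
      μ[fun ω => v (t + 1) ω i * v (t + 1) ω j | ℱ t] =ᵐ[μ] fun _ => F i j) :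
    (Matrix.of fun i j => ∫ ω, v' (t + 1) ω i * v' (t + 1) ω j ∂μ)
      - Matrix.of (fun i j => (∫ ω, v' (t + 1) ω i ∂μ) * ∫ ω, v' (t + 1) ω j ∂μ)
    = F
      + Z * (Matrix.of fun i j =>
          ∫ ω, (a (t + 1) ω i - a' (t + 1) ω i) * (a (t + 1) ω j - a' (t + 1) ω j) ∂μ) * Zᵀ
      - Matrix.of (fun i j => (∫ ω, v' (t + 1) ω i ∂μ) * ∫ ω, v' (t + 1) ω j ∂μ) :=
  variance_misspecified_error_decomposition_general μ ℱ Z T K K' y hy_meas hy_L2 a a' a₁ a₁' ha1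
    ha1' ha ha' ha_L2 ha'_L2 v v' hv hv' hcond t F hF
end

section
/- In the time-invariant misspecified Kalman setting, for all t ≥ 1 and s ≥ 1 the lag-s cross-covariance matrix of the misspecified forecast errors satisfies Cov(v'_t, v'_{t+s}) = Cov(v'_t, a_{t+1} − a'_{t+1}) · ( (T L'_{t+s−1})(T L'_{t+s−2}) ⋯ (T L'_{t+1}) )ᵀ · Zᵀ, where for s = 1 the ordered matrix product is the identity matrix I_p, and Cov(u, w) := E[(u − E u)(w − E w)ᵀ] for random vectors u, w. -/
/-!
With `e r = a r - a' r`, subtracting the two filter recursions gives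
`e (r + 1) = T L'_r e r + T (K r - K' r) (y r - Z a r)` and `v' r = (y r - Z a r) + Z e r`.
The true innovation `y r - Z a r` has conditional mean zero given `ℱ (r - 1)`, so it is
uncorrelated with `v' t` for `r > t`. Hence `Cov(v' t, e r)` is propagated by right
multiplication with `(T L'_r)ᵀ`, and `Cov(v' t, v' (t + s)) = Cov(v' t, e (t + s)) Zᵀ`.
-/

open Matrix MeasureTheory ProbabilityTheory

theorem Matrix.eq_mul_transpose_prod_of_succ {m n R : Type*} [Fintype n] [DecidableEq n]
    [CommSemiring R]
    {C : ℕ → Matrix m n R} {M : ℕ → Matrix n n R} {k : ℕ}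
    (h : ∀ r, k ≤ r → C (r + 1) = C r * (M r)ᵀ) (j : ℕ) :
    C (k + j) = C k * (((List.range j).map fun i => M (k + j - 1 - i)).prod)ᵀ := by
  induction j with
  | zero => simp
  | succ j ih =>
    have h_prod : ((List.range (j + 1)).map fun i => M (k + (j + 1) - 1 - i)).prod
        = M (k + j) * ((List.range j).map fun i => M (k + j - 1 - i)).prod := by
      rw [List.range_succ_eq_map, List.map_cons, List.map_map, List.prod_cons]
      congr 2
      exact List.map_congr_left fun i _ => by simp only [Function.comp_apply]; congr 1; omega
    rw [← add_assoc, h _ (Nat.le_add_right k j), ih, add_assoc, h_prod, transpose_mul,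
      Matrix.mul_assoc]

section MatrixVector

variable {Ω m n : Type*} [Fintype n] {mΩ : MeasurableSpace Ω}

theorem MeasureTheory.MemLp.const_mulVec [Fintype m] {μ : Measure Ω} {X : Ω → n → ℝ}
    (hX : MemLp X 2 μ) (M : Matrix m n ℝ) : MemLp (fun ω => M *ᵥ X ω) 2 μ :=
  (LinearMap.toContinuousLinearMap M.mulVecLin).comp_memLp' hX

theorem MeasureTheory.StronglyMeasurable.const_mulVec {X : Ω → n → ℝ}
    (hX : StronglyMeasurable X) (M : Matrix m n ℝ) : StronglyMeasurable fun ω => M *ᵥ X ω :=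
  (continuous_const.matrix_mulVec continuous_id).comp_stronglyMeasurable hX

end MatrixVector

namespace ProbabilityTheory

variable {Ω ι κ : Type*} {mΩ : MeasurableSpace Ω} {μ : Measure Ω}

noncomputable def crossCovMatrix (X : Ω → ι → ℝ) (Y : Ω → κ → ℝ) (μ : Measure Ω) :
    Matrix ι κ ℝ :=
  Matrix.of fun i j => cov[fun ω => X ω i, fun ω => Y ω j; μ]

theorem covariance_eq_of_condExp_ae_eq {m : MeasurableSpace Ω} [IsProbabilityMeasure μ]
    (hm : m ≤ mΩ) {F G H : Ω → ℝ} (hFm : StronglyMeasurable[m] F) (hF : MemLp F 2 μ)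
    (hG : MemLp G 2 μ) (hH : MemLp H 2 μ) (hGH : μ[G | m] =ᵐ[μ] H) :
    cov[F, G; μ] = cov[F, H; μ] := by
  have h_mean : μ[G] = μ[H] := by
    rw [← integral_condExp hm]
    exact integral_congr_ae hGH
  have h_mul : μ[F * G] = μ[F * H] := by
    rw [← integral_condExp hm]
    refine integral_congr_ae ?_
    filter_upwards [condExp_mul_of_stronglyMeasurable_left hFm (hF.integrable_mul hG)
      (hG.integrable one_le_two), hGH] with ω h_pull h_cond
    rw [h_pull, Pi.mul_apply, h_cond, Pi.mul_apply]
  rw [covariance_eq_sub hF hG, covariance_eq_sub hF hH, h_mean, h_mul]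

variable [Fintype ι] [Fintype κ] {X : Ω → ι → ℝ} {Y Y' : Ω → κ → ℝ}

theorem crossCovMatrix_add_right [IsFiniteMeasure μ] (hX : MemLp X 2 μ) (hY : MemLp Y 2 μ)
    (hY' : MemLp Y' 2 μ) :
    crossCovMatrix X (Y + Y') μ = crossCovMatrix X Y μ + crossCovMatrix X Y' μ := by
  ext i j
  exact covariance_add_right (hX.eval i) (hY.eval j) (hY'.eval j)

theorem crossCovMatrix_sub_right [IsFiniteMeasure μ] (hX : MemLp X 2 μ) (hY : MemLp Y 2 μ)
    (hY' : MemLp Y' 2 μ) :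
    crossCovMatrix X (Y - Y') μ = crossCovMatrix X Y μ - crossCovMatrix X Y' μ := by
  ext i j
  exact covariance_sub_right (hX.eval i) (hY.eval j) (hY'.eval j)

theorem crossCovMatrix_mulVec_right [IsFiniteMeasure μ] {n : Type*} [Fintype n]
    (M : Matrix n κ ℝ) (hX : MemLp X 2 μ) (hY : MemLp Y 2 μ) :
    crossCovMatrix X (fun ω => M *ᵥ Y ω) μ = crossCovMatrix X Y μ * Mᵀ := by
  ext i j
  simp only [crossCovMatrix, mul_apply, of_apply, transpose_apply, mulVec, dotProduct]
  rw [covariance_fun_sum_right (fun k => (hY.eval k).const_mul (M j k)) (hX.eval i)]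
  simp only [covariance_const_mul_right]
  exact Finset.sum_congr rfl fun k _ => mul_comm _ _

theorem crossCovMatrix_eq_of_condExp_ae_eq {m : MeasurableSpace Ω} [IsProbabilityMeasure μ]
    (hm : m ≤ mΩ) (hXm : StronglyMeasurable[m] X) (hX : MemLp X 2 μ) (hY : MemLp Y 2 μ)
    (hY' : MemLp Y' 2 μ) (hYY' : μ[Y | m] =ᵐ[μ] Y') :
    crossCovMatrix X Y μ = crossCovMatrix X Y' μ := by
  ext i j
  refine covariance_eq_of_condExp_ae_eq hm ((continuous_apply i).comp_stronglyMeasurable hXm)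
    (hX.eval i) (hY.eval j) (hY'.eval j) ?_
  filter_upwards [(ContinuousLinearMap.proj (R := ℝ) (φ := fun _ : κ => ℝ) j).comp_condExp_comm
    (hY.integrable one_le_two), hYY'] with ω h_comm h_cond
  rw [← h_cond]
  exact h_comm.symm

end ProbabilityTheory

section Kalman

variable {Ω ι : Type*} [Fintype ι] {mΩ : MeasurableSpace Ω} {d p : ℕ}
  (Z : Matrix (Fin d) (Fin p) ℝ) (T : Matrix (Fin p) (Fin p) ℝ)

theorem stronglyMeasurable_kalmanPredictor {ℱ : Filtration ℕ mΩ}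
    {K : ℕ → Matrix (Fin p) (Fin d) ℝ} {y : ℕ → Ω → Fin d → ℝ}
    (hy : ∀ t, StronglyMeasurable[ℱ t] (y t)) {b : ℕ → Ω → Fin p → ℝ}
    {b₁ : Fin p → ℝ} (hb1 : ∀ ω, b 1 ω = b₁)
    (hb : ∀ t, 1 ≤ t → ∀ ω, b (t + 1) ω = T *ᵥ b t ω + T *ᵥ (K t *ᵥ (y t ω - Z *ᵥ b t ω)))
    (n : ℕ) : StronglyMeasurable[ℱ n] (b (n + 1)) := by
  induction n with
  | zero =>
    rw [funext hb1]
    exact stronglyMeasurable_const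
  | succ n ih =>
    have hbn : StronglyMeasurable[ℱ (n + 1)] (b (n + 1)) := ih.mono (ℱ.mono n.le_succ)
    rw [funext (hb (n + 1) n.succ_pos)]
    exact (hbn.const_mulVec T).add
      ((((hy (n + 1)).sub (hbn.const_mulVec Z)).const_mulVec (K (n + 1))).const_mulVec T)

theorem kalmanPredictor_sub_kalmanPredictor (K K' : Matrix (Fin p) (Fin d) ℝ) (y : Fin d → ℝ)
    (b b' : Fin p → ℝ) :
    (T *ᵥ b + T *ᵥ (K *ᵥ (y - Z *ᵥ b))) - (T *ᵥ b' + T *ᵥ (K' *ᵥ (y - Z *ᵥ b')))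
      = (T * (1 - K' * Z)) *ᵥ (b - b') + (T * (K - K')) *ᵥ (y - Z *ᵥ b) := by
  simp only [← mulVec_mulVec, sub_mulVec, one_mulVec, mulVec_sub]
  abel

variable {μ : Measure Ω} [IsFiniteMeasure μ] {X : Ω → ι → ℝ} {y : Ω → Fin d → ℝ}
  {b b' : Ω → Fin p → ℝ} (hX : MemLp X 2 μ) (hy : MemLp y 2 μ) (hb : MemLp b 2 μ)
  (hb' : MemLp b' 2 μ)
include hX hy hb hb'

theorem crossCovMatrix_innovation_eq
    (horth : crossCovMatrix X y μ = crossCovMatrix X (fun ω => Z *ᵥ b ω) μ) :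
    crossCovMatrix X (fun ω => y ω - Z *ᵥ b' ω) μ = crossCovMatrix X (b - b') μ * Zᵀ := by
  rw [show (fun ω => y ω - Z *ᵥ b' ω) = y - fun ω => Z *ᵥ b' ω from rfl,
    crossCovMatrix_sub_right hX hy (hb'.const_mulVec Z), horth,
    crossCovMatrix_mulVec_right Z hX hb, crossCovMatrix_mulVec_right Z hX hb',
    crossCovMatrix_sub_right hX hb hb', Matrix.sub_mul]

theorem crossCovMatrix_kalmanPredictor_sub_succ (K K' : Matrix (Fin p) (Fin d) ℝ)
    (horth : crossCovMatrix X y μ = crossCovMatrix X (fun ω => Z *ᵥ b ω) μ) :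
    crossCovMatrix X (fun ω => (T *ᵥ b ω + T *ᵥ (K *ᵥ (y ω - Z *ᵥ b ω)))
        - (T *ᵥ b' ω + T *ᵥ (K' *ᵥ (y ω - Z *ᵥ b' ω)))) μ
      = crossCovMatrix X (b - b') μ * (T * (1 - K' * Z))ᵀ := by
  have hv : MemLp (fun ω => y ω - Z *ᵥ b ω) 2 μ := hy.sub (hb.const_mulVec Z)
  have hv_orth : crossCovMatrix X (fun ω => y ω - Z *ᵥ b ω) μ = 0 := by
    rw [show (fun ω => y ω - Z *ᵥ b ω) = y - fun ω => Z *ᵥ b ω from rfl,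
      crossCovMatrix_sub_right hX hy (hb.const_mulVec Z), horth, sub_self]
  have h_error : (fun ω => (T *ᵥ b ω + T *ᵥ (K *ᵥ (y ω - Z *ᵥ b ω)))
        - (T *ᵥ b' ω + T *ᵥ (K' *ᵥ (y ω - Z *ᵥ b' ω))))
      = (fun ω => (T * (1 - K' * Z)) *ᵥ (b - b') ω)
        + fun ω => (T * (K - K')) *ᵥ (y ω - Z *ᵥ b ω) :=
    funext fun ω => kalmanPredictor_sub_kalmanPredictor Z T K K' (y ω) (b ω) (b' ω)
  rw [h_error, crossCovMatrix_add_right hX ((hb.sub hb').const_mulVec _) (hv.const_mulVec _),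
    crossCovMatrix_mulVec_right _ hX (hb.sub hb'), crossCovMatrix_mulVec_right _ hX hv, hv_orth,
    Matrix.zero_mul, add_zero]

end Kalman

theorem cov_misspecified_errors_lag_general
    {Ω : Type*} {m0 : MeasurableSpace Ω} (μ : Measure Ω) [IsProbabilityMeasure μ]
    (ℱ : Filtration ℕ m0)
    {d p : ℕ}
    (Z : Matrix (Fin d) (Fin p) ℝ) (T : Matrix (Fin p) (Fin p) ℝ)
    (K K' : ℕ → Matrix (Fin p) (Fin d) ℝ)
    (L' : ℕ → Matrix (Fin p) (Fin p) ℝ)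
    (hL' : ∀ t, L' t = 1 - K' t * Z)
    (y : ℕ → Ω → Fin d → ℝ)
    (hy_meas : ∀ t, StronglyMeasurable[ℱ t] (y t))
    (hy_L2 : ∀ t, MemLp (y t) 2 μ)
    (a a' : ℕ → Ω → Fin p → ℝ)
    (a₁' : Fin p → ℝ)
    (ha1' : ∀ ω, a' 1 ω = a₁')
    (ha : ∀ t, 1 ≤ t → ∀ ω,
      a (t + 1) ω = T.mulVec (a t ω) + T.mulVec ((K t).mulVec (y t ω - Z.mulVec (a t ω))))
    (ha' : ∀ t, 1 ≤ t → ∀ ω,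
      a' (t + 1) ω
        = T.mulVec (a' t ω) + T.mulVec ((K' t).mulVec (y t ω - Z.mulVec (a' t ω))))
    (ha_L2 : ∀ t, MemLp (a t) 2 μ) (ha'_L2 : ∀ t, MemLp (a' t) 2 μ)
    (v' : ℕ → Ω → Fin d → ℝ)
    (hv' : ∀ t ω, v' t ω = y t ω - Z.mulVec (a' t ω))
    (hcond : ∀ t, 1 ≤ t → μ[y t | ℱ (t - 1)] =ᵐ[μ] fun ω => Z.mulVec (a t ω)) :
    ∀ t : ℕ, 1 ≤ t → ∀ s : ℕ, 1 ≤ s →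
      (Matrix.of fun i j =>
          ∫ ω, (v' t ω i - ∫ ω', v' t ω' i ∂μ)
            * (v' (t + s) ω j - ∫ ω', v' (t + s) ω' j ∂μ) ∂μ)
      = (Matrix.of fun i j =>
            ∫ ω, (v' t ω i - ∫ ω', v' t ω' i ∂μ)
              * ((a (t + 1) ω j - a' (t + 1) ω j)
                - ∫ ω', (a (t + 1) ω' j - a' (t + 1) ω' j) ∂μ) ∂μ)
          * (((List.range (s - 1)).map fun i => T * L' (t + s - 1 - i)).prod)ᵀ * Zᵀ := by
  intro t ht s hs
  have hv'_eq : ∀ r, v' r = fun ω => y r ω - Z *ᵥ a' r ω := fun r => funext (hv' r)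
  have hX : MemLp (v' t) 2 μ := hv'_eq t ▸ (hy_L2 t).sub ((ha'_L2 t).const_mulVec Z)
  have hXm : StronglyMeasurable[ℱ t] (v' t) := by
    obtain ⟨n, rfl⟩ : ∃ n, t = n + 1 := ⟨t - 1, by omega⟩
    have ha'_meas := (stronglyMeasurable_kalmanPredictor Z T hy_meas ha1' ha' n).mono
      (ℱ.mono n.le_succ)
    exact hv'_eq (n + 1) ▸ (hy_meas (n + 1)).sub (ha'_meas.const_mulVec Z)
  have horth : ∀ r, t + 1 ≤ r →
      crossCovMatrix (v' t) (y r) μ = crossCovMatrix (v' t) (fun ω => Z *ᵥ a r ω) μ :=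
    fun r hr => crossCovMatrix_eq_of_condExp_ae_eq (ℱ.le (r - 1))
      (hXm.mono (ℱ.mono (by omega))) hX (hy_L2 r) ((ha_L2 r).const_mulVec Z) (hcond r (by omega))
  have hrec : ∀ r, t + 1 ≤ r → crossCovMatrix (v' t) (a (r + 1) - a' (r + 1)) μ
      = crossCovMatrix (v' t) (a r - a' r) μ * (T * L' r)ᵀ := by
    intro r hr
    rw [hL', ← crossCovMatrix_kalmanPredictor_sub_succ Z T hX (hy_L2 r) (ha_L2 r) (ha'_L2 r)
      (K r) (K' r) (horth r hr)]
    congr 1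
    funext ω
    rw [Pi.sub_apply, ha r (by omega) ω, ha' r (by omega) ω]
  obtain ⟨j, rfl⟩ : ∃ j, s = j + 1 := ⟨s - 1, by omega⟩
  have hiter := eq_mul_transpose_prod_of_succ
    (C := fun r => crossCovMatrix (v' t) (a r - a' r) μ) hrec j
  rw [show t + 1 + j = t + (j + 1) by omega] at hiter
  change crossCovMatrix (v' t) (v' (t + (j + 1))) μ
    = crossCovMatrix (v' t) (a (t + 1) - a' (t + 1)) μ * _ * Zᵀ
  rw [Nat.add_sub_cancel, ← hiter, hv'_eq (t + (j + 1)),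
    crossCovMatrix_innovation_eq Z hX (hy_L2 _) (ha_L2 _) (ha'_L2 _) (horth _ (by omega))]

/-- In the time-invariant misspecified Kalman setting, for all `t ≥ 1`
and `s ≥ 1`,
`Cov(v'_t, v'_{t+s}) = Cov(v'_t, a_{t+1} − a'_{t+1}) ((T L'_{t+s−1}) ⋯ (T L'_{t+1}))ᵀ Zᵀ`,
where for `s = 1` the ordered product is the identity matrix. -/
theorem cov_misspecified_errors_lag
    {Ω : Type*} {m0 : MeasurableSpace Ω} (μ : Measure Ω) [IsProbabilityMeasure μ]
    (ℱ : Filtration ℕ m0) (hℱ0 : ℱ 0 = ⊥)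
    {d p : ℕ}
    (Z : Matrix (Fin d) (Fin p) ℝ) (T : Matrix (Fin p) (Fin p) ℝ)
    (K K' : ℕ → Matrix (Fin p) (Fin d) ℝ)
    (L' : ℕ → Matrix (Fin p) (Fin p) ℝ)
    (hL' : ∀ t, L' t = 1 - K' t * Z)
    (y : ℕ → Ω → Fin d → ℝ)
    (hy_meas : ∀ t, StronglyMeasurable[ℱ t] (y t))
    (hy_L2 : ∀ t, MemLp (y t) 2 μ)
    (a a' : ℕ → Ω → Fin p → ℝ)
    (a₁ a₁' : Fin p → ℝ)
    (ha1 : ∀ ω, a 1 ω = a₁) (ha1' : ∀ ω, a' 1 ω = a₁')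
    (ha : ∀ t, 1 ≤ t → ∀ ω,
      a (t + 1) ω = T.mulVec (a t ω) + T.mulVec ((K t).mulVec (y t ω - Z.mulVec (a t ω))))
    (ha' : ∀ t, 1 ≤ t → ∀ ω,
      a' (t + 1) ω
        = T.mulVec (a' t ω) + T.mulVec ((K' t).mulVec (y t ω - Z.mulVec (a' t ω))))
    (ha_L2 : ∀ t, MemLp (a t) 2 μ) (ha'_L2 : ∀ t, MemLp (a' t) 2 μ)
    (v' : ℕ → Ω → Fin d → ℝ)
    (hv' : ∀ t ω, v' t ω = y t ω - Z.mulVec (a' t ω))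
    (hcond : ∀ t, 1 ≤ t → μ[y t | ℱ (t - 1)] =ᵐ[μ] fun ω => Z.mulVec (a t ω)) :
    ∀ t : ℕ, 1 ≤ t → ∀ s : ℕ, 1 ≤ s →
      (Matrix.of fun i j =>
          ∫ ω, (v' t ω i - ∫ ω', v' t ω' i ∂μ)
            * (v' (t + s) ω j - ∫ ω', v' (t + s) ω' j ∂μ) ∂μ)
      = (Matrix.of fun i j =>
            ∫ ω, (v' t ω i - ∫ ω', v' t ω' i ∂μ)
              * ((a (t + 1) ω j - a' (t + 1) ω j)
                - ∫ ω', (a (t + 1) ω' j - a' (t + 1) ω' j) ∂μ) ∂μ)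
          * (((List.range (s - 1)).map fun i => T * L' (t + s - 1 - i)).prod)ᵀ * Zᵀ :=
  cov_misspecified_errors_lag_general μ ℱ Z T K K' L' hL' y hy_meas hy_L2 a a' a₁' ha1' ha ha' ha_L2
    ha'_L2 v' hv' hcond
end
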